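/- Let $(R,\mathfrak{m}) \to (S,\mathfrak{n})$ be a faithfully flat local homomorphism of Noetherian local rings, and let $N$ and $P$ be finitely generated $R$-modules such that $S \otimes_R N$ is a direct summand of $S \otimes_R P$. Then $N$ is a direct summand of $P^b$ for some positive integer $b$. -/

import Mathlib

open IsLocalRing CategoryTheory

noncomputable section

/-- The depth of a module over a local ring: the supremum of lengths of
regular sequences contained in the maximal ideal. -/
def moduleDepth (R M : Type) [CommRing R] [IsLocalRing R]
    [AddCommGroup M] [Module R M] : ℕ∞ :=
  sSup {n : ℕ∞ | ∃ rs : List R, (rs.length : ℕ∞) = n ∧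
    (∀ r ∈ rs, r ∈ maximalIdeal R) ∧ RingTheory.Sequence.IsRegular M rs}

/-- A maximal Cohen-Macaulay module over a local ring: finitely generated, nonzero,
with depth equal to the Krull dimension of the ring. -/
def IsMCM (R M : Type) [CommRing R] [IsLocalRing R]
    [AddCommGroup M] [Module R M] : Prop :=
  Module.Finite R M ∧ Nontrivial M ∧ (moduleDepth R M : WithBot ℕ∞) = ringKrullDim R

/-- A Cohen-Macaulay local ring. -/
def IsCMLocalRing (R : Type) [CommRing R] [IsLocalRing R] : Prop :=
  (moduleDepth R R : WithBot ℕ∞) = ringKrullDim R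

/-- The Ext group `Ext^n_R(M, N)` as an `R`-module. -/
def ExtMod (R : Type) [CommRing R] (n : ℕ) (M N : Type)
    [AddCommGroup M] [Module R M] [AddCommGroup N] [Module R N] : Type :=
  ((Ext R (ModuleCat R) n).obj (Opposite.op (ModuleCat.of R M))).obj (ModuleCat.of R N)

instance (R : Type) [CommRing R] (n : ℕ) (M N : Type)
    [AddCommGroup M] [Module R M] [AddCommGroup N] [Module R N] :
    AddCommGroup (ExtMod R n M N) := by
  unfold ExtMod; infer_instance

instance (R : Type) [CommRing R] (n : ℕ) (M N : Type)
    [AddCommGroup M] [Module R M] [AddCommGroup N] [Module R N] :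
    Module R (ExtMod R n M N) := by
  unfold ExtMod; infer_instance

/-- An indecomposable module. -/
def IsIndecomposable (R M : Type) [CommRing R] [AddCommGroup M] [Module R M] : Prop :=
  Nontrivial M ∧ ∀ N₁ N₂ : Submodule R M, IsCompl N₁ N₂ → N₁ = ⊥ ∨ N₂ = ⊥

/-- Countable Cohen-Macaulay type: there is a countable set of finitely presented
modules containing, up to isomorphism, all maximal Cohen-Macaulay modules. -/
def HasCountableCMType (R : Type) [CommRing R] [IsLocalRing R] : Prop :=
  ∃ S : Set (Σ n : ℕ, Submodule R (Fin n → R)), S.Countable ∧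
    ∀ (M : Type) [AddCommGroup M] [Module R M], IsMCM R M →
      ∃ s ∈ S, Nonempty (M ≃ₗ[R] ((Fin s.1 → R) ⧸ s.2))

/-- Injective dimension at most `n`, via vanishing of Ext. -/
def HasInjDimLE (R Y : Type) [CommRing R] [AddCommGroup Y] [Module R Y] (n : ℕ) : Prop :=
  ∀ (M : Type) [AddCommGroup M] [Module R M] (i : ℕ), n < i → Subsingleton (ExtMod R i M Y)

/-- Finite injective dimension. -/
def HasFiniteInjDim (R Y : Type) [CommRing R] [AddCommGroup Y] [Module R Y] : Prop :=
  ∃ n, HasInjDimLE R Y n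

/-- A regular local ring: Noetherian local, whose maximal ideal is generated by
`dim R` elements. -/
def IsRegularLocalRing' (A : Type) [CommRing A] : Prop :=
  IsNoetherianRing A ∧ ∃ h : IsLocalRing A, ∃ s : Finset A,
    Ideal.span (s : Set A) = @IsLocalRing.maximalIdeal A _ h ∧
    ((s.card : ℕ∞) : WithBot ℕ∞) = ringKrullDim A

/-- A catenary ring: any two saturated chains of primes with the same endpoints
have the same length. -/
def IsCatenaryRing (A : Type) [CommRing A] : Prop :=
  ∀ c d : RelSeries {p : PrimeSpectrum A × PrimeSpectrum A | p.1 ⋖ p.2},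
    c.head = d.head → c.last = d.last → c.length = d.length

/-- A regular (not necessarily local) Noetherian ring: all localizations at primes
are regular local rings. -/
def IsRegularRing' (A : Type) [CommRing A] : Prop :=
  ∀ p : PrimeSpectrum A, IsRegularLocalRing' (Localization.AtPrime p.asIdeal)

/-- An excellent local ring: Noetherian, universally catenary, J-2 (regular loci of
finite type algebras are open), with geometrically regular formal fibres. -/
def IsExcellentLocalRing (R : Type) [CommRing R] [IsLocalRing R] : Prop :=
  IsNoetherianRing R ∧
  (∀ n : ℕ, IsCatenaryRing (MvPolynomial (Fin n) R)) ∧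
  (∀ (A : Type) [CommRing A] [Algebra R A], Algebra.FiniteType R A →
      IsOpen {p : PrimeSpectrum A | IsRegularLocalRing' (Localization.AtPrime p.asIdeal)}) ∧
  (∀ p : PrimeSpectrum R,
    ∀ (L : Type) [Field L] [Algebra (ResidueField (Localization.AtPrime p.asIdeal)) L],
      FiniteDimensional (ResidueField (Localization.AtPrime p.asIdeal)) L →
      letI : Algebra R L := ((algebraMap (ResidueField (Localization.AtPrime p.asIdeal)) L).comp
        (algebraMap R (ResidueField (Localization.AtPrime p.asIdeal)))).toAlgebra
      IsRegularRing' (TensorProduct R L (AdicCompletion (maximalIdeal R) R)))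

/-- A free resolution of `M` by finitely generated free modules. -/
structure FreeRes (R : Type) [CommRing R] (M : Type) [AddCommGroup M] [Module R M] where
  rank : ℕ → ℕ
  aug : (Fin (rank 0) → R) →ₗ[R] M
  d : (i : ℕ) → ((Fin (rank (i+1)) → R) →ₗ[R] (Fin (rank i) → R))
  aug_surjective : Function.Surjective aug
  exact_zero : LinearMap.range (d 0) = LinearMap.ker aug
  exact_succ : ∀ i, LinearMap.range (d (i+1)) = LinearMap.ker (d i)

/-- A minimal free resolution over a local ring. -/
structure MinFreeRes (R : Type) [CommRing R] [IsLocalRing R]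
    (M : Type) [AddCommGroup M] [Module R M] extends FreeRes R M where
  minimal_aug : LinearMap.ker aug ≤ (maximalIdeal R) • ⊤
  minimal : ∀ i, LinearMap.range (d i) ≤ (maximalIdeal R) • ⊤

/-- `S` is (isomorphic to) the `n`-th syzygy of `M` in the given free resolution;
the `0`-th syzygy is `M` itself, and for `n ≥ 1` it is the image of `d (n-1)`. -/
def FreeRes.IsSyzygy {R : Type} [CommRing R] {M : Type} [AddCommGroup M] [Module R M]
    (F : FreeRes R M) (n : ℕ) (S : Type) [AddCommGroup S] [Module R S] : Prop :=
  match n with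
  | 0 => Nonempty (S ≃ₗ[R] M)
  | k+1 => Nonempty (S ≃ₗ[R] LinearMap.range (F.d k))

/-- A canonical module for a Cohen-Macaulay local ring: a maximal Cohen-Macaulay
module of finite injective dimension whose endomorphism ring is `R`. -/
def HasCanonicalModule (R : Type) [CommRing R] [IsLocalRing R] : Prop :=
  ∃ ω : ModuleCat R, Module.Finite R ω ∧ IsMCM R ω ∧ HasFiniteInjDim R ω ∧
    Nonempty (Module.End R ω ≃ₐ[R] R)

/-- The height of an ideal: the infimum of dimensions of localizations at primes
containing it. -/
def idealHeight (R : Type) [CommRing R] (J : Ideal R) : WithBot ℕ∞ :=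
  sInf {h | ∃ p : PrimeSpectrum R, J ≤ p.asIdeal ∧
    h = ringKrullDim (Localization.AtPrime p.asIdeal)}

end

/-! Let `I ⊆ End_R N` be the `R`-span of the composites `N → P → N`; the identity of `N` lies
in `I` exactly when `N` is a direct summand of some `P^b`. Since `Hom` out of a finitely
presented module commutes with flat base change, `S ⊗ I` is the `S`-span of the composites
`S ⊗ N → S ⊗ P → S ⊗ N`, which contains the identity because `S ⊗ N` is a direct summand of
`S ⊗ P`. Faithful flatness pulls `1 ⊗ id ∈ S ⊗ I` back to `id ∈ I`. -/

open TensorProduct LinearMap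

section IsBaseChange

variable {R S M N : Type*} [CommSemiring R] [CommSemiring S] [Algebra R S]
  [AddCommMonoid M] [Module R M] [AddCommMonoid N] [Module R N] [Module S N]
  [IsScalarTower R S N] {f : M →ₗ[R] N}

theorem IsBaseChange.map_equiv_baseChange (hf : IsBaseChange S f) (p : Submodule R M) :
    (p.baseChange S).map hf.equiv.toLinearMap = Submodule.span S (f '' p) := by
  rw [Submodule.baseChange_eq_span, Submodule.map_span, Submodule.map_coe, ← Set.image_comp]
  congr 2
  ext m
  simp [hf.equiv_tmul]

theorem IsBaseChange.span_range_eq_top (hf : IsBaseChange S f) :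
    Submodule.span S (Set.range f) = ⊤ := by
  rw [← Set.image_univ, ← Submodule.top_coe (R := R), ← hf.map_equiv_baseChange,
    Submodule.baseChange_top, Submodule.map_top, LinearEquiv.range]

end IsBaseChange

def compositesThrough (R M N : Type*) [CommRing R] [AddCommGroup M] [Module R M]
    [AddCommGroup N] [Module R N] : Submodule R (Module.End R M) :=
  Submodule.map₂ (llcomp R M N M : (N →ₗ[R] M) →ₗ[R] (M →ₗ[R] N) →ₗ[R] M →ₗ[R] M) ⊤ ⊤

theorem exists_comp_eq_of_mem_compositesThrough {R M N : Type*} [CommRing R]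
    [AddCommGroup M] [Module R M] [AddCommGroup N] [Module R N] {w : Module.End R M}
    (hw : w ∈ compositesThrough R M N) :
    ∃ (n : ℕ) (F : (Fin (n + 1) → N) →ₗ[R] M) (G : M →ₗ[R] (Fin (n + 1) → N)), F ∘ₗ G = w := by
  rw [compositesThrough, ← Submodule.span_univ, ← Submodule.span_univ, Submodule.map₂_span_span,
    Submodule.mem_span_set'] at hw
  obtain ⟨n, c, x, rfl⟩ := hw
  choose u _ v _ huv using fun i => (x i).2
  -- a zero summand in front keeps the number of copies of `N` positive
  refine ⟨n, lsum R (fun _ => N) R (Fin.cons 0 fun i => c i • u i),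
    pi (Fin.cons (0 : M →ₗ[R] N) v), ?_⟩
  ext m
  simp [Fin.sum_univ_succ, ← huv]

theorem id_mem_compositesThrough_of_retract_baseChange {R S M N : Type*} [CommRing R]
    [CommRing S] [Algebra R S] [Module.FaithfullyFlat R S] [AddCommGroup M] [Module R M]
    [Module.FinitePresentation R M] [AddCommGroup N] [Module R N] [Module.FinitePresentation R N]
    (F : S ⊗[R] N →ₗ[S] S ⊗[R] M) (G : S ⊗[R] M →ₗ[S] S ⊗[R] N) (hFG : F ∘ₗ G = LinearMap.id) :
    LinearMap.id ∈ compositesThrough R M N := by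
  have hMM := Module.FinitePresentation.isBaseChange_map R M M S
  suffices (1 : S) ⊗ₜ[R] (LinearMap.id : Module.End R M) ∈
      (compositesThrough R M N).baseChange S by
    rwa [← Submodule.span_singleton_le_iff_mem, ← Submodule.baseChange_le_iff (A := S),
      Submodule.baseChange_span, Set.image_singleton, Submodule.span_singleton_le_iff_mem]
  have hid : LinearMap.id ∈
      ((compositesThrough R M N).baseChange S).map hMM.equiv.toLinearMap := by
    have hF : F ∈ Submodule.span S (Set.range (baseChangeHom R S N M)) := by
      rw [(Module.FinitePresentation.isBaseChange_map R N M S).span_range_eq_top]; trivial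
    have hG : G ∈ Submodule.span S (Set.range (baseChangeHom R S M N)) := by
      rw [(Module.FinitePresentation.isBaseChange_map R M N S).span_range_eq_top]; trivial
    have hcomp := Submodule.apply_mem_map₂ (llcomp S (S ⊗[R] M) (S ⊗[R] N) (S ⊗[R] M)) hF hG
    rw [Submodule.map₂_span_span] at hcomp
    rw [hMM.map_equiv_baseChange, ← hFG]
    refine Submodule.span_mono ?_ hcomp
    rintro _ ⟨_, ⟨u, rfl⟩, _, ⟨v, rfl⟩, rfl⟩
    refine ⟨u ∘ₗ v, Submodule.apply_mem_map₂ _ trivial trivial, ?_⟩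
    ext m
    simp
  obtain ⟨x, hx, hxid⟩ := hid
  have : x = (1 : S) ⊗ₜ[R] LinearMap.id := hMM.equiv.injective <| by
    rw [LinearEquiv.coe_toLinearMap] at hxid
    rw [hxid, hMM.equiv_tmul, one_smul, LinearMap.baseChangeHom_apply, LinearMap.baseChange_id]
  rwa [← this]

theorem wiegand_plus_category_descent_general (R S : Type) [CommRing R]
    [IsNoetherianRing R] [CommRing S] [Algebra R S]
    [Module.FaithfullyFlat R S]
    (N P : Type) [AddCommGroup N] [Module R N] [Module.Finite R N]
    [AddCommGroup P] [Module R P] [Module.Finite R P]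
    (h : ∃ W : ModuleCat S,
      Nonempty ((TensorProduct R S N × W) ≃ₗ[S] TensorProduct R S P)) :
    ∃ b : ℕ, 0 < b ∧ ∃ C : ModuleCat R,
      Nonempty ((N × C) ≃ₗ[R] (Fin b → P)) := by
  obtain ⟨W, ⟨e⟩⟩ := h
  have := Module.finitePresentation_of_finite R N
  have := Module.finitePresentation_of_finite R P
  have hid : LinearMap.id ∈ compositesThrough R N P :=
    id_mem_compositesThrough_of_retract_baseChange (S := S) (fst S _ W ∘ₗ e.symm.toLinearMap)
      (e.toLinearMap ∘ₗ inl S _ W) (by ext; simp)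
  obtain ⟨n, F, G, hFG⟩ := exists_comp_eq_of_mem_compositesThrough hid
  let split := (Function.Exact.splitInjectiveEquiv (LinearMap.exact_map_mkQ_range G)
    (Submodule.mkQ_surjective _) ⟨F, hFG⟩).1
  -- `C : ModuleCat R` lives in an arbitrary universe, hence the `ULift`
  exact ⟨n + 1, n.succ_pos, ModuleCat.of R (ULift (_ ⧸ range G)),
    ⟨((LinearEquiv.refl R N).prodCongr ULift.moduleEquiv).trans split.symm⟩⟩

/-- Wiegand's descent lemma for the plus category. -/
theorem wiegand_plus_category_descent (R S : Type) [CommRing R] [IsLocalRing R]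
    [IsNoetherianRing R] [CommRing S] [IsLocalRing S] [IsNoetherianRing S] [Algebra R S]
    [IsLocalHom (algebraMap R S)] [Module.FaithfullyFlat R S]
    (N P : Type) [AddCommGroup N] [Module R N] [Module.Finite R N]
    [AddCommGroup P] [Module R P] [Module.Finite R P]
    (h : ∃ W : ModuleCat S,
      Nonempty ((TensorProduct R S N × W) ≃ₗ[S] TensorProduct R S P)) :
    ∃ b : ℕ, 0 < b ∧ ∃ C : ModuleCat R,
      Nonempty ((N × C) ≃ₗ[R] (Fin b → P)) :=
  wiegand_plus_category_descent_general R S N P h
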